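/- Suppose the delay system ẋ(t) = f(x_t) is forward complete on C⁰. Then the following are equivalent: (a) the system satisfies Lyapunov stability (for every ε > 0 there exists δ > 0 such that ‖φ(t,x₀)‖_∞ ≤ ε for all t ≥ 0 and all x₀ ∈ C⁰ with ‖x₀‖_∞ ≤ δ), global attractivity (for every x₀ ∈ C⁰, ‖φ(t,x₀)‖_∞ → 0 as t → ∞), and Lagrange stability (for every ρ > 0 one has sup{‖φ(t,x₀)‖_∞ : t ≥ 0, x₀ ∈ C⁰, ‖x₀‖_∞ ≤ ρ} < ∞); (b) there exists a class-KL function σ such that ‖φ(t,x₀)‖_∞ ≤ σ(‖x₀‖_∞, t) for all t ≥ 0 and all x₀ ∈ C⁰. -/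

import Mathlib

/-
Proof idea. (b) ⇒ (a) is read off from the properties of a KL bound. For (a) ⇒ (b), global
attractivity is first made uniform on balls. Otherwise some solutions from a ρ-ball have segments
of norm > ε at times t_k ≥ k + r. After time r a solution is Lipschitz with a constant depending
only on its Lagrange bound, so by Arzelà–Ascoli the segments at times t_k - k have a subsequence
converging to some y. The solution through y enters the δ-ball of Lyapunov stability at some
time τ, by Grönwall so do the solutions starting near y, and afterwards they stay ε-small: a
contradiction. Then b(s, t), the supremum of ‖x_τ‖ over τ ≥ t and ‖x₀‖ ≤ s, is nondecreasing in
s, nonincreasing in t and tends to 0 as t → ∞ and as s → 0, and s⁻¹ ∫ₛ^{2s} b(u, t) du + s e^{-t}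
is a KL function above it.
-/

open Set MeasureTheory Filter Topology
open scoped ENNReal NNReal

noncomputable section

abbrev Vec (n : ℕ) := EuclideanSpace ℝ (Fin n)

variable {n : ℕ}

/-- The segment `x_t` of a history `x : ℝ → ℝⁿ`, i.e. `x_t(s) = x(t+s)`
(only its values on `[-r,0]` are relevant). -/
def seg (r : ℝ) (x : ℝ → Vec n) (t : ℝ) : ℝ → Vec n := fun s => x (t + s)

/-- Sup norm over `[-r,0]`. -/
def supN (r : ℝ) (g : ℝ → Vec n) : ℝ := sSup ((fun s => ‖g s‖) '' Icc (-r) 0)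

/-- Membership in `C⁰ = C([-r,0];ℝⁿ)`. -/
def MemC0 (r : ℝ) (g : ℝ → Vec n) : Prop := ContinuousOn g (Icc (-r) 0)

/-- `f` vanishes at `0`, depends only on the values of its argument on `[-r,0]`,
and is Lipschitz on bounded subsets of `C⁰` with a nondecreasing (nonnegative)
modulus `L`. -/
def GoodRHS (r : ℝ) (f : (ℝ → Vec n) → Vec n) (L : ℝ → ℝ) : Prop :=
  f 0 = 0 ∧
  (∀ x y : ℝ → Vec n, EqOn x y (Icc (-r) 0) → f x = f y) ∧
  Monotone L ∧ (∀ s : ℝ, 0 ≤ L s) ∧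
  ∀ R : ℝ, ∀ x y : ℝ → Vec n, MemC0 r x → MemC0 r y → supN r x ≤ R → supN r y ≤ R →
    ‖f x - f y‖ ≤ L R * supN r (x - y)

/-- `x : ℝ → ℝⁿ` is a solution on `[-r, b)` (with `b ∈ (0,∞]` an extended
nonnegative real) of the delay system `ẋ(t) = f(x_t)` with initial condition `x0`:
it is continuous on `[-r,b)`, coincides with `x0` on `[-r,0]`, and satisfies the
integral equation `x(t) = x(0) + ∫₀ᵗ f(x_s) ds` on `[0,b)`. -/
def IsSol (r : ℝ) (f : (ℝ → Vec n) → Vec n) (x0 x : ℝ → Vec n) (b : ℝ≥0∞) : Prop :=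
  ContinuousOn x {t : ℝ | -r ≤ t ∧ ENNReal.ofReal t < b} ∧
  EqOn x x0 (Icc (-r) 0) ∧
  ∀ t : ℝ, 0 ≤ t → ENNReal.ofReal t < b → x t = x 0 + ∫ s in (0:ℝ)..t, f (seg r x s)

/-- Class `KL` functions `σ : [0,∞)×[0,∞) → [0,∞)`. -/
def ClassKL (σ : ℝ → ℝ → ℝ) : Prop :=
  (∀ s t : ℝ, 0 ≤ s → 0 ≤ t → 0 ≤ σ s t) ∧
  (∀ t : ℝ, 0 ≤ t →
    ContinuousOn (fun s => σ s t) (Ici 0) ∧ StrictMonoOn (fun s => σ s t) (Ici 0) ∧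
      σ 0 t = 0) ∧
  (∀ s : ℝ, 0 ≤ s →
    AntitoneOn (fun t => σ s t) (Ici 0) ∧ Tendsto (fun t => σ s t) atTop (nhds 0))

/-- Class `K∞` functions `a : [0,∞) → [0,∞)`. -/
def ClassKInf (a : ℝ → ℝ) : Prop :=
  (∀ s : ℝ, 0 ≤ s → 0 ≤ a s) ∧ ContinuousOn a (Ici 0) ∧ StrictMonoOn a (Ici 0) ∧
  a 0 = 0 ∧ Tendsto a atTop atTop

/-- The set of Hölder difference quotients `‖g t - g s‖ / |t-s|^α` over a set `S`. -/
def hRatios (α : ℝ) (S : Set ℝ) (g : ℝ → Vec n) : Set ℝ :=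
  {c | ∃ t ∈ S, ∃ s ∈ S, t ≠ s ∧ c = ‖g t - g s‖ / |t - s| ^ α}

/-- Membership in the Hölder space `C^{0,α}([-r,0])`. -/
def MemHol (r α : ℝ) (g : ℝ → Vec n) : Prop :=
  MemC0 r g ∧ BddAbove (hRatios α (Icc (-r) 0) g)

/-- The Hölder norm `max(‖g‖_∞, [g]_α)`. -/
def holderNorm (r α : ℝ) (g : ℝ → Vec n) : ℝ :=
  max (supN r g) (sSup (hRatios α (Icc (-r) 0) g))

/-- Membership in the Sobolev space `W^{1,p}([-r,0])`: `g` is absolutely continuous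
on `[-r,0]` (i.e. the integral of an integrable function `d`, which is then its a.e.
derivative) with `d ∈ L^p((-r,0))`. -/
def MemW (r : ℝ) (p : ℝ≥0∞) (g : ℝ → Vec n) : Prop :=
  ∃ d : ℝ → Vec n, IntegrableOn d (Icc (-r) 0) ∧
    eLpNorm d p (volume.restrict (Ioo (-r) 0)) < ⊤ ∧
    ∀ t ∈ Icc (-r) 0, g t = g (-r) + ∫ s in (-r)..t, d s

/-- The Sobolev norm `‖g‖_∞ + ‖ġ‖_p`; for an absolutely continuous `g` the a.e.
derivative coincides a.e. on `(-r,0)` with `deriv g`. -/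
def sobNorm (r : ℝ) (p : ℝ≥0∞) (g : ℝ → Vec n) : ℝ :=
  supN r g + (eLpNorm (deriv g) p (volume.restrict (Ioo (-r) 0))).toReal

/-- The Hölder exponent `1 - 1/p`, with the convention `1/∞ = 0`. -/
def hexp (p : ℝ≥0∞) : ℝ := 1 - (p.toReal)⁻¹

open Metric

theorem le_mul_exp_of_le_add_integral {g : ℝ → ℝ} {c K T : ℝ} (hK : 0 ≤ K)
    (hg : ContinuousOn g (Icc 0 T)) (h : ∀ s ∈ Icc 0 T, g s ≤ c + K * ∫ u in 0..s, g u) :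
    ∀ t ∈ Icc 0 T, g t ≤ c * Real.exp (K * t) := by
  set G : ℝ → ℝ := fun s => c + K * ∫ u in 0..s, g u
  have hGc : ContinuousOn G (Icc 0 T) := by
    rcases lt_or_ge T 0 with hT | hT
    · simp [Icc_eq_empty_of_lt hT]
    · have := intervalIntegral.continuousOn_primitive_interval
        (μ := volume) (uIcc_of_le hT ▸ hg.integrableOn_Icc)
      rw [uIcc_of_le hT] at this
      exact continuousOn_const.add (continuousOn_const.mul this)
  have hG' : ∀ s ∈ Ico 0 T, HasDerivWithinAt G (K * g s) (Ici s) s := by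
    intro s hs
    have hmem : Icc 0 T ∈ 𝓝[>] s := Icc_mem_nhdsGT_of_mem ⟨hs.1, hs.2⟩
    refine ((intervalIntegral.integral_hasDerivWithinAt_right ?_ ?_ ?_).const_mul K).const_add c
    · exact (hg.mono (Icc_subset_Icc_right hs.2.le)).intervalIntegrable_of_Icc hs.1
    · exact (hg.stronglyMeasurableAtFilter_nhdsWithin measurableSet_Icc s).filter_mono
        (nhdsWithin_le_of_mem hmem)
    · exact (hg s (Ico_subset_Icc_self hs)).mono_of_mem_nhdsWithin hmem
  intro t ht
  calc g t ≤ G t := h t ht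
    _ ≤ gronwallBound c K 0 (t - 0) :=
      le_gronwallBound_of_liminf_deriv_right_le hGc
        (fun s hs _ hr => (hG' s hs).liminf_right_slope_le hr) (by simp [G])
        (fun s hs => by simpa using mul_le_mul_of_nonneg_left (h s (Ico_subset_Icc_self hs)) hK)
        t ht
    _ = c * Real.exp (K * t) := by rw [sub_zero, gronwallBound_ε0]

open BoundedContinuousFunction in
theorem exists_subseq_tendstoUniformlyOn_of_lipschitzOnWith {α E : Type*} [MetricSpace α]
    [NormedAddCommGroup E] [ProperSpace E] {s : Set α} (hs : IsCompact s) {K : ℝ≥0} {M : ℝ}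
    (g : ℕ → α → E) (hbdd : ∀ k, ∀ u ∈ s, ‖g k u‖ ≤ M) (hlip : ∀ k, LipschitzOnWith K (g k) s) :
    ∃ y : α → E, ∃ φ : ℕ → ℕ, StrictMono φ ∧ ContinuousOn y s ∧
      TendstoUniformlyOn (fun k => g (φ k)) y atTop s := by
  classical
  have : CompactSpace s := isCompact_iff_compactSpace.1 hs
  let A : Set (s →ᵇ E) := {F | LipschitzWith K F ∧ ∀ u, ‖F u‖ ≤ M}
  let G : ℕ → s →ᵇ E := fun k =>
    .mkOfCompact ⟨s.domRestrict (g k), (hlip k).continuousOn.domRestrict⟩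
  have hGA : ∀ k, G k ∈ A := fun k => ⟨(hlip k).to_restrict, fun u => hbdd k u u.2⟩
  have hA : IsCompact (closure A) :=
    arzela_ascoli (closedBall 0 M) (isCompact_closedBall 0 M) A
      (fun F u hF => mem_closedBall_zero_iff.2 (hF.2 u))
      (LipschitzWith.uniformEquicontinuous _ K fun F => F.2.1).equicontinuous
  obtain ⟨F, -, φ, hφ, hGF⟩ := hA.tendsto_subseq fun k => subset_closure (hGA k)
  refine ⟨fun u => if hu : u ∈ s then F ⟨u, hu⟩ else 0, φ, hφ, ?_, ?_⟩
  · rw [continuousOn_iff_continuous_domRestrict]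
    convert F.continuous
    exact funext fun u => dif_pos u.2
  · rw [tendstoUniformlyOn_iff_tendstoUniformly_comp_coe]
    convert tendsto_iff_tendstoUniformly.1 hGF
    · rfl
    · exact funext fun u => dif_pos u.2

-- The junk value `0⁻¹ = 0` gives `dyadicMean h 0 = 0`.
def dyadicMean (h : ℝ → ℝ) (s : ℝ) : ℝ := s⁻¹ * ∫ u in s..2 * s, h u

section dyadicMean

variable {h : ℝ → ℝ} {s : ℝ}

@[simp]
lemma dyadicMean_zero (h : ℝ → ℝ) : dyadicMean h 0 = 0 := by simp [dyadicMean]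

lemma MonotoneOn.intervalIntegrable_of_Ici {c : ℝ} (hh : MonotoneOn h (Ici c)) {a b : ℝ}
    (ha : c ≤ a) (hb : c ≤ b) : IntervalIntegrable h volume a b :=
  (hh.mono fun _ hu => (le_min ha hb).trans hu.1).intervalIntegrable

lemma le_dyadicMean (hh : MonotoneOn h (Ici 0)) (hs : 0 < s) : h s ≤ dyadicMean h s := by
  have : ∫ _ in s..2 * s, h s ≤ ∫ u in s..2 * s, h u :=
    intervalIntegral.integral_mono_on (by linarith) intervalIntegrable_const
      (hh.intervalIntegrable_of_Ici hs.le (by linarith))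
      fun u hu => hh hs.le (hs.le.trans hu.1) hu.1
  rw [intervalIntegral.integral_const, smul_eq_mul, show 2 * s - s = s by ring] at this
  rw [dyadicMean, le_inv_mul_iff₀ hs]
  exact this

lemma dyadicMean_le (hh : MonotoneOn h (Ici 0)) (hs : 0 < s) : dyadicMean h s ≤ h (2 * s) := by
  have : ∫ u in s..2 * s, h u ≤ ∫ _ in s..2 * s, h (2 * s) :=
    intervalIntegral.integral_mono_on (by linarith)
      (hh.intervalIntegrable_of_Ici hs.le (by linarith)) intervalIntegrable_const
      fun u hu => hh (hs.le.trans hu.1) (by simp; linarith) hu.2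
  rw [intervalIntegral.integral_const, smul_eq_mul, show 2 * s - s = s by ring] at this
  rw [dyadicMean, inv_mul_le_iff₀ hs]
  exact this

lemma dyadicMean_eq_integral_comp_mul (h : ℝ → ℝ) (hs : s ≠ 0) :
    dyadicMean h s = ∫ v in (1 : ℝ)..2, h (s * v) := by
  rw [intervalIntegral.integral_comp_mul_left h hs, smul_eq_mul, mul_one, mul_comm s 2,
    dyadicMean]

lemma monotoneOn_dyadicMean (hh : MonotoneOn h (Ici 0)) :
    MonotoneOn (dyadicMean h) (Ioi 0) := by
  intro s (hs : 0 < s) s' (hs' : 0 < s') hss'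
  have hcomp : ∀ {c : ℝ}, 0 < c → MonotoneOn (fun v => h (c * v)) (uIcc 1 2) := by
    intro c hc v hv w hw hvw
    rw [uIcc_of_le one_le_two] at hv hw
    exact hh (by simp; nlinarith [hv.1]) (by simp; nlinarith [hw.1])
      (mul_le_mul_of_nonneg_left hvw hc.le)
  rw [dyadicMean_eq_integral_comp_mul h hs.ne', dyadicMean_eq_integral_comp_mul h hs'.ne']
  refine intervalIntegral.integral_mono_on one_le_two (hcomp hs).intervalIntegrable
    (hcomp hs').intervalIntegrable fun v hv => ?_
  exact hh (by simp; nlinarith [hv.1]) (by simp; nlinarith [hv.1])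
    (mul_le_mul_of_nonneg_right hss' (by linarith [hv.1]))

lemma continuousOn_dyadicMean (hh : MonotoneOn h (Ici 0)) :
    ContinuousOn (dyadicMean h) (Ioi 0) := by
  set h₀ : ℝ → ℝ := fun u => h (max u 0)
  have hh₀ : Monotone h₀ := fun a b hab =>
    hh (le_max_right a 0) (le_max_right b 0) (max_le_max_right 0 hab)
  have hP : Continuous fun c => ∫ u in (0 : ℝ)..c, h₀ u :=
    intervalIntegral.continuous_primitive (fun _ _ => hh₀.intervalIntegrable) 0
  have heq : EqOn (fun s => s⁻¹ * ((∫ u in (0 : ℝ)..2 * s, h₀ u) - ∫ u in (0 : ℝ)..s, h₀ u))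
      (dyadicMean h) (Ioi 0) := by
    intro s (hs : 0 < s)
    simp only [dyadicMean]
    rw [intervalIntegral.integral_interval_sub_left hh₀.intervalIntegrable
      hh₀.intervalIntegrable]
    congr 1
    refine intervalIntegral.integral_congr fun u hu => ?_
    rw [uIcc_of_le (by linarith)] at hu
    simp only [h₀, max_eq_left (hs.le.trans hu.1)]
  refine ContinuousOn.congr ?_ heq.symm
  exact (continuousOn_inv₀.mono fun s (hs : 0 < s) => hs.ne').mul
    ((hP.comp (continuous_const_mul 2)).sub hP).continuousOn

lemma dyadicMean_le_dyadicMean {h' : ℝ → ℝ} (hh : MonotoneOn h (Ici 0))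
    (hh' : MonotoneOn h' (Ici 0)) (hle : ∀ u, 0 ≤ u → h u ≤ h' u) (hs : 0 ≤ s) :
    dyadicMean h s ≤ dyadicMean h' s :=
  mul_le_mul_of_nonneg_left
    (intervalIntegral.integral_mono_on (by linarith)
      (hh.intervalIntegrable_of_Ici hs (by linarith))
      (hh'.intervalIntegrable_of_Ici hs (by linarith)) fun u hu => hle u (hs.trans hu.1))
    (inv_nonneg.2 hs)

lemma dyadicMean_nonneg (hh : MonotoneOn h (Ici 0)) (h0 : ∀ u, 0 ≤ u → 0 ≤ h u) (hs : 0 ≤ s) :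
    0 ≤ dyadicMean h s := by
  rcases hs.eq_or_lt with rfl | hs
  · simp
  · exact (h0 s hs.le).trans (le_dyadicMean hh hs)

end dyadicMean

-- Averaging over `[s, 2s]` makes a bound that is merely monotone in `s` continuous in `s`;
-- the term `s e^{-t}` makes it strictly increasing.
def klMajorant (b : ℝ → ℝ → ℝ) (s t : ℝ) : ℝ := dyadicMean (b · t) s + s * Real.exp (-t)

@[simp]
lemma klMajorant_zero (b : ℝ → ℝ → ℝ) (t : ℝ) : klMajorant b 0 t = 0 := by
  simp [klMajorant]

section klMajorant

variable {b : ℝ → ℝ → ℝ} {s t : ℝ}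

lemma klMajorant_nonneg (hmono : MonotoneOn (b · t) (Ici 0)) (hb0 : ∀ u, 0 ≤ u → 0 ≤ b u t)
    (hs : 0 ≤ s) : 0 ≤ klMajorant b s t :=
  add_nonneg (dyadicMean_nonneg hmono hb0 hs) (mul_nonneg hs (Real.exp_pos _).le)

lemma klMajorant_le (hmono : MonotoneOn (b · t) (Ici 0)) (hb0 : 0 ≤ b 0 t) (hs : 0 ≤ s) :
    klMajorant b s t ≤ b (2 * s) t + s * Real.exp (-t) := by
  rcases hs.eq_or_lt with rfl | hs
  · simpa using hb0
  · exact add_le_add (dyadicMean_le hmono hs) le_rfl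

lemma le_klMajorant (hmono : MonotoneOn (b · t) (Ici 0)) (hanti : AntitoneOn (b 0) (Ici 0))
    (hzero : Tendsto (b · 0) (𝓝[≥] 0) (𝓝 0)) (hs : 0 ≤ s) (ht : 0 ≤ t) :
    b s t ≤ klMajorant b s t := by
  rcases hs.eq_or_lt with rfl | hs
  · have hb00 : b 0 0 = 0 := tendsto_nhds_unique (tendsto_pure_nhds _ _)
      (hzero.mono_left (pure_le_nhdsWithin self_mem_Ici))
    simpa [hb00] using hanti self_mem_Ici ht ht
  · exact (le_dyadicMean hmono hs).trans
      (le_add_of_nonneg_right (mul_nonneg hs.le (Real.exp_pos _).le))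

lemma continuousOn_klMajorant (hmono : MonotoneOn (b · t) (Ici 0))
    (hb0 : ∀ u, 0 ≤ u → 0 ≤ b u t) (hanti : ∀ u, 0 ≤ u → b u t ≤ b u 0)
    (hzero : Tendsto (b · 0) (𝓝[≥] 0) (𝓝 0)) (ht : 0 ≤ t) :
    ContinuousOn (klMajorant b · t) (Ici 0) := by
  intro s hs
  rcases (mem_Ici.1 hs).eq_or_lt with rfl | hs
  · have hdouble : Tendsto (fun s : ℝ => 2 * s) (𝓝[≥] 0) (𝓝[≥] 0) :=
      tendsto_nhdsWithin_of_tendsto_nhds_of_eventually_within _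
        (((continuous_const_mul 2).tendsto' 0 0 (mul_zero 2)).mono_left nhdsWithin_le_nhds)
        (eventually_nhdsWithin_of_forall fun s (hs : 0 ≤ s) => by simp only [mem_Ici]; positivity)
    have hup : Tendsto (fun s => b (2 * s) 0 + s) (𝓝[≥] 0) (𝓝 0) := by
      simpa using (hzero.comp hdouble).add (tendsto_nhdsWithin_of_tendsto_nhds tendsto_id)
    show Tendsto _ (𝓝[≥] 0) (𝓝 (klMajorant b 0 t))
    rw [klMajorant_zero]
    refine tendsto_of_tendsto_of_tendsto_of_le_of_le' tendsto_const_nhds hup ?_ ?_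
    · filter_upwards [self_mem_nhdsWithin] with s hs
      exact klMajorant_nonneg hmono hb0 hs
    · filter_upwards [self_mem_nhdsWithin] with s (hs : 0 ≤ s)
      calc klMajorant b s t ≤ b (2 * s) t + s * Real.exp (-t) :=
            klMajorant_le hmono (hb0 0 le_rfl) hs
        _ ≤ b (2 * s) 0 + s := add_le_add (hanti _ (by positivity))
            (mul_le_of_le_one_right hs (Real.exp_le_one_iff.2 (by linarith)))
  · have : ContinuousOn (klMajorant b · t) (Ioi 0) :=
      (continuousOn_dyadicMean hmono).add (continuousOn_id.mul continuousOn_const)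
    exact (this.continuousAt (Ioi_mem_nhds hs)).continuousWithinAt

lemma strictMonoOn_klMajorant (hmono : MonotoneOn (b · t) (Ici 0))
    (hb0 : ∀ u, 0 ≤ u → 0 ≤ b u t) : StrictMonoOn (klMajorant b · t) (Ici 0) := by
  intro s (hs : 0 ≤ s) s' (hs' : 0 ≤ s') hss'
  rcases hs.eq_or_lt with rfl | hs
  · show klMajorant b 0 t < klMajorant b s' t
    rw [klMajorant_zero]
    exact add_pos_of_nonneg_of_pos (dyadicMean_nonneg hmono hb0 hs')
      (mul_pos hss' (Real.exp_pos _))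
  · exact add_lt_add_of_le_of_lt (monotoneOn_dyadicMean hmono hs (hs.trans hss') hss'.le)
      (mul_lt_mul_of_pos_right hss' (Real.exp_pos _))

theorem classKL_klMajorant (hmono : ∀ t, 0 ≤ t → MonotoneOn (b · t) (Ici 0))
    (hanti : ∀ s, 0 ≤ s → AntitoneOn (b s) (Ici 0)) (hzero : Tendsto (b · 0) (𝓝[≥] 0) (𝓝 0))
    (hlim : ∀ s, 0 ≤ s → Tendsto (b s) atTop (𝓝 0)) :
    ClassKL (klMajorant b) := by
  have hb0 : ∀ t, 0 ≤ t → ∀ s, 0 ≤ s → 0 ≤ b s t := fun t ht s hs =>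
    le_of_tendsto (hlim s hs) (eventually_atTop.2 ⟨t, fun t' ht' =>
      hanti s hs (mem_Ici.2 ht) (mem_Ici.2 (ht.trans ht')) ht'⟩)
  refine ⟨fun s t hs ht => klMajorant_nonneg (hmono t ht) (hb0 t ht) hs,
    fun t ht => ⟨continuousOn_klMajorant (hmono t ht) (hb0 t ht)
      (fun s hs => hanti s hs self_mem_Ici ht ht) hzero ht,
      strictMonoOn_klMajorant (hmono t ht) (hb0 t ht), klMajorant_zero b t⟩,
    fun s hs => ⟨?_, ?_⟩⟩
  · intro t (ht : 0 ≤ t) t' (ht' : 0 ≤ t') htt'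
    exact add_le_add (dyadicMean_le_dyadicMean (hmono t' ht') (hmono t ht)
      (fun u hu => hanti u hu ht ht' htt') hs)
      (mul_le_mul_of_nonneg_left (Real.exp_le_exp.2 (neg_le_neg htt')) hs)
  · have hup : Tendsto (fun t => b (2 * s) t + s * Real.exp (-t)) atTop (𝓝 0) := by
      simpa using (hlim _ (by positivity)).add (Real.tendsto_exp_neg_atTop_nhds_zero.const_mul s)
    refine tendsto_of_tendsto_of_tendsto_of_le_of_le' tendsto_const_nhds hup ?_ ?_
    · filter_upwards [eventually_ge_atTop 0] with t ht
      exact klMajorant_nonneg (hmono t ht) (hb0 t ht) hs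
    · filter_upwards [eventually_ge_atTop 0] with t ht
      exact klMajorant_le (hmono t ht) (hb0 t ht 0 le_rfl) hs

end klMajorant

section DelaySystems

variable {r : ℝ} {f : (ℝ → Vec n) → Vec n} {L : ℝ → ℝ}

lemma supN_nonneg (g : ℝ → Vec n) : 0 ≤ supN r g :=
  Real.sSup_nonneg fun _ ⟨_, _, hc⟩ => hc ▸ norm_nonneg _

lemma supN_le (hr : 0 ≤ r) {g : ℝ → Vec n} {C : ℝ} (h : ∀ s ∈ Icc (-r) 0, ‖g s‖ ≤ C) :
    supN r g ≤ C :=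
  csSup_le ((nonempty_Icc.2 (neg_nonpos.2 hr)).image _) (forall_mem_image.2 h)

lemma norm_le_supN {g : ℝ → Vec n} (hg : MemC0 r g) {s : ℝ} (hs : s ∈ Icc (-r) 0) :
    ‖g s‖ ≤ supN r g :=
  le_csSup (isCompact_Icc.image_of_continuousOn hg.norm).bddAbove (mem_image_of_mem _ hs)

lemma supN_zero (hr : 0 ≤ r) : supN r (0 : ℝ → Vec n) = 0 :=
  (supN_le hr (by simp)).antisymm (supN_nonneg 0)

lemma supN_congr {g h : ℝ → Vec n} (hgh : EqOn g h (Icc (-r) 0)) : supN r g = supN r h := by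
  unfold supN
  rw [image_congr fun s hs => congrArg norm (hgh hs)]

lemma supN_sub_comm (g h : ℝ → Vec n) : supN r (g - h) = supN r (h - g) := by
  simp only [supN, Pi.sub_apply, norm_sub_rev]

lemma supN_le_supN_add_supN_sub (hr : 0 ≤ r) {g h : ℝ → Vec n} (hh : MemC0 r h)
    (hgh : MemC0 r (g - h)) : supN r g ≤ supN r h + supN r (g - h) :=
  supN_le hr fun s hs => calc
    ‖g s‖ ≤ ‖h s‖ + ‖(g - h) s‖ := norm_le_insert' (g s) (h s)
    _ ≤ supN r h + supN r (g - h) := add_le_add (norm_le_supN hh hs) (norm_le_supN hgh hs)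

@[simp]
lemma seg_zero (x : ℝ → Vec n) : seg r x 0 = x := by
  funext s; simp [seg]

lemma seg_seg (x : ℝ → Vec n) (a t : ℝ) : seg r (seg r x a) t = seg r x (a + t) := by
  funext s; simp only [seg, add_assoc]

lemma memC0_seg {x : ℝ → Vec n} (hx : ContinuousOn x (Ici (-r))) {t : ℝ} (ht : 0 ≤ t) :
    MemC0 r (seg r x t) :=
  hx.comp (continuous_const_add t).continuousOn fun s hs => by
    simp only [mem_Ici]; linarith [hs.1]

lemma supN_seg_le (hr : 0 ≤ r) {x : ℝ → Vec n} {C T : ℝ} (hC : ∀ u ∈ Icc (-r) T, ‖x u‖ ≤ C)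
    {t : ℝ} (ht : 0 ≤ t) (htT : t ≤ T) : supN r (seg r x t) ≤ C :=
  supN_le hr fun s hs => hC (t + s) ⟨by linarith [hs.1], by linarith [hs.2]⟩

lemma norm_le_of_supN_seg_le (hr : 0 ≤ r) {x : ℝ → Vec n} (hx : ContinuousOn x (Ici (-r)))
    {C : ℝ} (hC : ∀ t, 0 ≤ t → supN r (seg r x t) ≤ C) {u : ℝ} (hu : -r ≤ u) : ‖x u‖ ≤ C := by
  rcases le_total u 0 with h | h
  · simpa [seg] using (norm_le_supN (memC0_seg hx le_rfl) ⟨hu, h⟩).trans (hC 0 le_rfl)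
  · simpa [seg] using (norm_le_supN (memC0_seg hx h) ⟨by linarith, le_rfl⟩).trans (hC u h)

lemma exists_norm_le_on_Icc {x : ℝ → Vec n} (hx : ContinuousOn x (Ici (-r))) (T : ℝ) :
    ∃ C, ∀ u ∈ Icc (-r) T, ‖x u‖ ≤ C :=
  isCompact_Icc.exists_bound_of_continuousOn (hx.mono fun _ hu => hu.1)

lemma tendsto_supN_seg_sub (hr : 0 ≤ r) {x : ℝ → Vec n} (hx : ContinuousOn x (Ici (-r)))
    {t₀ : ℝ} (ht₀ : 0 ≤ t₀) :
    Tendsto (fun t => supN r (seg r x t - seg r x t₀)) (𝓝[Ici 0] t₀) (𝓝 0) := by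
  have hu : UniformContinuousOn x (Icc (-r) (t₀ + 1)) :=
    isCompact_Icc.uniformContinuousOn_of_continuous (hx.mono fun _ hu => hu.1)
  rw [Metric.tendsto_nhdsWithin_nhds]
  intro ε hε
  obtain ⟨δ, hδ, hxδ⟩ := Metric.uniformContinuousOn_iff.1 hu (ε / 2) (half_pos hε)
  refine ⟨min δ 1, by positivity, fun t (ht : 0 ≤ t) htt₀ => ?_⟩
  obtain ⟨htδ, ht1⟩ := lt_min_iff.1 htt₀
  have ht1' := (abs_lt.1 (Real.dist_eq t t₀ ▸ ht1)).2
  have hle : supN r (seg r x t - seg r x t₀) ≤ ε / 2 := supN_le hr fun s hs =>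
    (hxδ (t + s) ⟨by linarith [hs.1], by linarith [hs.2]⟩ (t₀ + s)
      ⟨by linarith [hs.1], by linarith [hs.2]⟩ (by rwa [dist_add_right])).le
  rw [Real.dist_eq, sub_zero, abs_of_nonneg (supN_nonneg _)]
  linarith

lemma continuousOn_supN_seg (hr : 0 ≤ r) {x : ℝ → Vec n} (hx : ContinuousOn x (Ici (-r))) :
    ContinuousOn (fun t => supN r (seg r x t)) (Ici 0) := by
  intro t₀ ht₀
  refine tendsto_iff_dist_tendsto_zero.2 (squeeze_zero'
    (Eventually.of_forall fun _ => dist_nonneg) ?_ (tendsto_supN_seg_sub hr hx ht₀))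
  filter_upwards [self_mem_nhdsWithin] with t ht
  have h₁ := supN_le_supN_add_supN_sub hr (memC0_seg hx ht₀)
    ((memC0_seg hx ht).sub (memC0_seg hx ht₀))
  have h₂ := supN_le_supN_add_supN_sub hr (memC0_seg hx ht)
    ((memC0_seg hx ht₀).sub (memC0_seg hx ht))
  rw [supN_sub_comm] at h₂
  rw [Real.dist_eq, abs_sub_le_iff]
  constructor <;> linarith

namespace GoodRHS

lemma modulus_nonneg (hf : GoodRHS r f L) (R : ℝ) : 0 ≤ L R := hf.2.2.2.1 R

lemma norm_sub_le (hf : GoodRHS r f L) {R : ℝ} {x y : ℝ → Vec n} (hx : MemC0 r x)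
    (hy : MemC0 r y) (hxR : supN r x ≤ R) (hyR : supN r y ≤ R) :
    ‖f x - f y‖ ≤ L R * supN r (x - y) :=
  hf.2.2.2.2 R x y hx hy hxR hyR

lemma norm_le (hf : GoodRHS r f L) (hr : 0 ≤ r) {g : ℝ → Vec n} (hg : MemC0 r g) {M : ℝ}
    (hgM : supN r g ≤ M) : ‖f g‖ ≤ L M * M := by
  have h := hf.norm_sub_le (y := 0) hg continuousOn_const hgM
    ((supN_zero hr).trans_le ((supN_nonneg g).trans hgM))
  rw [hf.1, sub_zero, sub_zero] at h
  exact h.trans (mul_le_mul_of_nonneg_left hgM (hf.modulus_nonneg M))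

lemma norm_sub_seg_le (hf : GoodRHS r f L) (hr : 0 ≤ r) {x y : ℝ → Vec n}
    (hx : ContinuousOn x (Ici (-r))) (hy : ContinuousOn y (Ici (-r))) {C T : ℝ}
    (hxC : ∀ u ∈ Icc (-r) T, ‖x u‖ ≤ C) (hyC : ∀ u ∈ Icc (-r) T, ‖y u‖ ≤ C) {t t' : ℝ}
    (ht : t ∈ Icc 0 T) (ht' : t' ∈ Icc 0 T) :
    ‖f (seg r x t) - f (seg r y t')‖ ≤ L C * supN r (seg r x t - seg r y t') :=
  hf.norm_sub_le (memC0_seg hx ht.1) (memC0_seg hy ht'.1) (supN_seg_le hr hxC ht.1 ht.2)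
    (supN_seg_le hr hyC ht'.1 ht'.2)

lemma continuousOn_comp_seg (hf : GoodRHS r f L) (hr : 0 ≤ r) {x : ℝ → Vec n}
    (hx : ContinuousOn x (Ici (-r))) : ContinuousOn (fun t => f (seg r x t)) (Ici 0) := by
  intro t₀ (ht₀ : 0 ≤ t₀)
  obtain ⟨C, hC⟩ := exists_norm_le_on_Icc hx (t₀ + 1)
  refine tendsto_iff_norm_sub_tendsto_zero.2 (squeeze_zero'
    (Eventually.of_forall fun _ => norm_nonneg _) ?_
    (by simpa using (tendsto_supN_seg_sub hr hx ht₀).const_mul (L C)))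
  filter_upwards [self_mem_nhdsWithin,
    nhdsWithin_le_nhds (eventually_le_nhds (lt_add_one t₀))] with t (ht : 0 ≤ t) ht1
  exact hf.norm_sub_seg_le hr hx hx hC hC ⟨ht, ht1⟩ ⟨ht₀, by linarith⟩

lemma intervalIntegrable_comp_seg (hf : GoodRHS r f L) (hr : 0 ≤ r) {x : ℝ → Vec n}
    (hx : ContinuousOn x (Ici (-r))) {a b : ℝ} (ha : 0 ≤ a) (hb : 0 ≤ b) :
    IntervalIntegrable (fun s => f (seg r x s)) volume a b :=
  ((hf.continuousOn_comp_seg hr hx).mono fun _ hu => (le_min ha hb).trans hu.1).intervalIntegrable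

end GoodRHS

namespace IsSol

variable {x0 x y0 y : ℝ → Vec n}

lemma continuousOn (hx : IsSol r f x0 x ⊤) : ContinuousOn x (Ici (-r)) :=
  hx.1.mono fun _ ht => ⟨ht, ENNReal.ofReal_lt_top⟩

lemma eq_add_integral (hx : IsSol r f x0 x ⊤) {t : ℝ} (ht : 0 ≤ t) :
    x t = x 0 + ∫ s in (0 : ℝ)..t, f (seg r x s) :=
  hx.2.2 t ht ENNReal.ofReal_lt_top

lemma sub_eq_integral (hx : IsSol r f x0 x ⊤) (hr : 0 ≤ r) (hf : GoodRHS r f L) {a b : ℝ}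
    (ha : 0 ≤ a) (hb : 0 ≤ b) : x b - x a = ∫ s in a..b, f (seg r x s) := by
  rw [hx.eq_add_integral hb, hx.eq_add_integral ha, add_sub_add_left_eq_sub,
    intervalIntegral.integral_interval_sub_left
      (hf.intervalIntegrable_comp_seg hr hx.continuousOn le_rfl hb)
      (hf.intervalIntegrable_comp_seg hr hx.continuousOn le_rfl ha)]

lemma norm_sub_le (hx : IsSol r f x0 x ⊤) (hr : 0 ≤ r) (hf : GoodRHS r f L) {M T : ℝ}
    (hM : ∀ u ∈ Icc (-r) T, ‖x u‖ ≤ M) {a b : ℝ} (ha : a ∈ Icc 0 T) (hb : b ∈ Icc 0 T) :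
    ‖x b - x a‖ ≤ L M * M * |b - a| := by
  rw [hx.sub_eq_integral hr hf ha.1 hb.1]
  refine intervalIntegral.norm_integral_le_of_norm_le_const fun s hs => ?_
  have hs' : s ∈ Icc 0 T := by
    rw [uIoc_eq_union] at hs
    rcases hs with hs | hs
    · exact ⟨ha.1.trans hs.1.le, hs.2.trans hb.2⟩
    · exact ⟨hb.1.trans hs.1.le, hs.2.trans ha.2⟩
  exact hf.norm_le hr (memC0_seg hx.continuousOn hs'.1) (supN_seg_le hr hM hs'.1 hs'.2)

lemma lipschitzOnWith_seg (hx : IsSol r f x0 x ⊤) (hr : 0 ≤ r) (hf : GoodRHS r f L) {M : ℝ}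
    (hM : ∀ u, -r ≤ u → ‖x u‖ ≤ M) {a : ℝ} (ha : r ≤ a) :
    LipschitzOnWith (L M * M).toNNReal (seg r x a) (Icc (-r) 0) := by
  refine LipschitzOnWith.of_dist_le_mul fun u hu v hv => ?_
  rw [dist_eq_norm, dist_eq_norm, Real.norm_eq_abs]
  calc ‖x (a + u) - x (a + v)‖ ≤ L M * M * |a + u - (a + v)| :=
        hx.norm_sub_le hr hf (T := a) (fun u hu => hM u hu.1)
          ⟨by linarith [hv.1], by linarith [hv.2]⟩ ⟨by linarith [hu.1], by linarith [hu.2]⟩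
    _ ≤ (L M * M).toNNReal * |u - v| := by
        rw [add_sub_add_left_eq_sub]
        exact mul_le_mul_of_nonneg_right (Real.le_coe_toNNReal _) (abs_nonneg _)

protected lemma seg (hx : IsSol r f x0 x ⊤) (hr : 0 ≤ r) (hf : GoodRHS r f L) {a : ℝ}
    (ha : 0 ≤ a) : IsSol r f (seg r x a) (seg r x a) ⊤ := by
  refine ⟨?_, fun _ _ => rfl, fun t ht _ => ?_⟩
  · exact (hx.continuousOn.comp (continuous_const_add a).continuousOn
      fun t (ht : -r ≤ t) => show -r ≤ a + t by linarith).mono fun t ht => ht.1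
  · simp only [seg_seg, intervalIntegral.integral_comp_add_left (fun s => f (seg r x s)),
      add_zero]
    rw [← hx.sub_eq_integral hr hf ha (by linarith)]
    simp [seg]

lemma norm_sub_le_add_integral (hx : IsSol r f x0 x ⊤) (hy : IsSol r f y0 y ⊤) (hr : 0 ≤ r)
    (hf : GoodRHS r f L) {M T : ℝ} (hxM : ∀ u ∈ Icc (-r) T, ‖x u‖ ≤ M)
    (hyM : ∀ u ∈ Icc (-r) T, ‖y u‖ ≤ M) {v : ℝ} (hv : v ∈ Icc 0 T) :
    ‖x v - y v‖ ≤ supN r (x - y) + L M * ∫ u in (0 : ℝ)..v, supN r (seg r (x - y) u) := by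
  have hxy : ContinuousOn (x - y) (Ici (-r)) := hx.continuousOn.sub hy.continuousOn
  have hdiff : x v - y v = (x 0 - y 0) + ∫ u in (0 : ℝ)..v, (f (seg r x u) - f (seg r y u)) := by
    rw [intervalIntegral.integral_sub
      (hf.intervalIntegrable_comp_seg hr hx.continuousOn le_rfl hv.1)
      (hf.intervalIntegrable_comp_seg hr hy.continuousOn le_rfl hv.1),
      ← hx.sub_eq_integral hr hf le_rfl hv.1, ← hy.sub_eq_integral hr hf le_rfl hv.1]
    abel
  have hintegral : ‖∫ u in (0 : ℝ)..v, (f (seg r x u) - f (seg r y u))‖ ≤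
      ∫ u in (0 : ℝ)..v, L M * supN r (seg r (x - y) u) :=
    intervalIntegral.norm_integral_le_of_norm_le hv.1 (ae_of_all _ fun u hu =>
      hf.norm_sub_seg_le hr hx.continuousOn hy.continuousOn hxM hyM
        ⟨hu.1.le, hu.2.trans hv.2⟩ ⟨hu.1.le, hu.2.trans hv.2⟩)
      (((continuousOn_supN_seg hr hxy).mono Icc_subset_Ici_self).intervalIntegrable_of_Icc
        hv.1 |>.const_mul _)
  rw [hdiff, ← intervalIntegral.integral_const_mul]
  exact (norm_add_le _ _).trans (add_le_add
    (norm_le_supN (g := x - y) (hxy.mono Icc_subset_Ici_self) ⟨by linarith, le_rfl⟩) hintegral)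

-- Continuous dependence on initial data, by Grönwall's inequality for `t ↦ ‖(x - y)_t‖`.
theorem supN_seg_sub_le (hx : IsSol r f x0 x ⊤) (hy : IsSol r f y0 y ⊤) (hr : 0 ≤ r)
    (hf : GoodRHS r f L) {M T : ℝ} (hxM : ∀ u ∈ Icc (-r) T, ‖x u‖ ≤ M)
    (hyM : ∀ u ∈ Icc (-r) T, ‖y u‖ ≤ M) {t : ℝ} (ht : t ∈ Icc 0 T) :
    supN r (seg r (x - y) t) ≤ supN r (x - y) * Real.exp (L M * t) := by
  set g : ℝ → ℝ := fun s => supN r (seg r (x - y) s)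
  have hxy : ContinuousOn (x - y) (Ici (-r)) := hx.continuousOn.sub hy.continuousOn
  have hg : ContinuousOn g (Ici 0) := continuousOn_supN_seg hr hxy
  have hg0 : ∀ u ∈ Icc (-r) 0, ‖(x - y) u‖ ≤ g 0 := fun u hu => by
    simpa [g] using norm_le_supN (memC0_seg hxy le_rfl) hu
  have hint : ∀ s ∈ Icc 0 T, g s ≤ g 0 + L M * ∫ u in (0 : ℝ)..s, g u := by
    intro s hs
    have hI : 0 ≤ L M * ∫ u in (0 : ℝ)..s, g u := mul_nonneg (hf.modulus_nonneg M)
      (intervalIntegral.integral_nonneg hs.1 fun _ _ => supN_nonneg _)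
    refine supN_le hr fun u hu => ?_
    rcases le_total (s + u) 0 with h | h
    · exact (hg0 (s + u) ⟨by linarith [hu.1, hs.1], h⟩).trans (le_add_of_nonneg_right hI)
    · refine (hx.norm_sub_le_add_integral hy hr hf hxM hyM ⟨h, by linarith [hu.2, hs.2]⟩).trans
        (add_le_add (by simp [g]) (mul_le_mul_of_nonneg_left ?_ (hf.modulus_nonneg M)))
      exact intervalIntegral.integral_mono_interval le_rfl h (by linarith [hu.2])
        (ae_of_all _ fun _ => supN_nonneg _)
        ((hg.mono Icc_subset_Ici_self).intervalIntegrable_of_Icc hs.1)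
  simpa [g] using le_mul_exp_of_le_add_integral (hf.modulus_nonneg M)
    (hg.mono Icc_subset_Ici_self) hint t ht

end IsSol

def LyapunovStable (r : ℝ) (f : (ℝ → Vec n) → Vec n) : Prop :=
  ∀ ε : ℝ, 0 < ε → ∃ δ : ℝ, 0 < δ ∧ ∀ x0 x : ℝ → Vec n, MemC0 r x0 →
    IsSol r f x0 x ⊤ → supN r x0 ≤ δ → ∀ t : ℝ, 0 ≤ t → supN r (seg r x t) ≤ ε

def GloballyAttractive (r : ℝ) (f : (ℝ → Vec n) → Vec n) : Prop :=
  ∀ x0 x : ℝ → Vec n, MemC0 r x0 → IsSol r f x0 x ⊤ →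
    Tendsto (fun t => supN r (seg r x t)) atTop (nhds 0)

def LagrangeStable (r : ℝ) (f : (ℝ → Vec n) → Vec n) : Prop :=
  ∀ ρ : ℝ, 0 < ρ → ∃ M : ℝ, ∀ x0 x : ℝ → Vec n, MemC0 r x0 →
    IsSol r f x0 x ⊤ → supN r x0 ≤ ρ → ∀ t : ℝ, 0 ≤ t → supN r (seg r x t) ≤ M

def UniformlyAttractive (r : ℝ) (f : (ℝ → Vec n) → Vec n) : Prop :=
  ∀ ρ ε : ℝ, 0 < ρ → 0 < ε → ∃ T : ℝ, ∀ x0 x : ℝ → Vec n, MemC0 r x0 →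
    IsSol r f x0 x ⊤ → supN r x0 ≤ ρ → ∀ t : ℝ, T ≤ t → supN r (seg r x t) ≤ ε

lemma LyapunovStable.exists_supN_seg_le_after (hS : LyapunovStable r f) (hr : 0 ≤ r)
    (hf : GoodRHS r f L) {ε : ℝ} (hε : 0 < ε) :
    ∃ δ : ℝ, 0 < δ ∧ ∀ x0 x : ℝ → Vec n, IsSol r f x0 x ⊤ → ∀ τ, 0 ≤ τ →
      supN r (seg r x τ) ≤ δ → ∀ t, τ ≤ t → supN r (seg r x t) ≤ ε := by
  obtain ⟨δ, hδ, hstab⟩ := hS ε hε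
  refine ⟨δ, hδ, fun x0 x hx τ hτ hxτ t ht => ?_⟩
  simpa [seg_seg] using
    hstab _ _ (memC0_seg hx.continuousOn hτ) (hx.seg hr hf hτ) hxτ (t - τ) (by linarith)

lemma GloballyAttractive.exists_supN_seg_le (hA : GloballyAttractive r f) (hr : 0 ≤ r)
    (hf : GoodRHS r f L) {y Z : ℝ → Vec n} (hy : MemC0 r y) (hZ : IsSol r f y Z ⊤) {δ : ℝ}
    (hδ : 0 < δ) (M : ℝ) :
    ∃ τ, 0 ≤ τ ∧ ∃ η, 0 < η ∧ ∀ w0 w : ℝ → Vec n, IsSol r f w0 w ⊤ →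
      (∀ u, -r ≤ u → ‖w u‖ ≤ M) → supN r (w0 - y) ≤ η → supN r (seg r w τ) ≤ δ := by
  obtain ⟨τ, hZτ, hτ⟩ := (((hA y Z hy hZ).eventually (ge_mem_nhds (half_pos hδ))).and
    (eventually_ge_atTop 0)).exists
  obtain ⟨C, hC⟩ := exists_norm_le_on_Icc hZ.continuousOn τ
  set K := max M C
  refine ⟨τ, hτ, δ / 2 / Real.exp (L K * τ), by positivity, fun w0 w hw hwM hw0 => ?_⟩
  have hwZ : supN r (seg r (w - Z) τ) ≤ δ / 2 := by
    have hgr := hw.supN_seg_sub_le hZ hr hf (fun u hu => (hwM u hu.1).trans (le_max_left M C))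
      (fun u hu => (hC u hu).trans (le_max_right M C)) ⟨hτ, le_rfl⟩
    rw [supN_congr (g := w - Z) (h := w0 - y) fun u hu => by simp [hw.2.1 hu, hZ.2.1 hu]] at hgr
    exact hgr.trans ((le_div_iff₀ (Real.exp_pos _)).1 hw0)
  calc supN r (seg r w τ) ≤ supN r (seg r Z τ) + supN r (seg r w τ - seg r Z τ) :=
        supN_le_supN_add_supN_sub hr (memC0_seg hZ.continuousOn hτ)
          ((memC0_seg hw.continuousOn hτ).sub (memC0_seg hZ.continuousOn hτ))
    _ ≤ δ / 2 + δ / 2 := add_le_add hZτ hwZ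
    _ = δ := add_halves δ

theorem GloballyAttractive.uniformlyAttractive (hA : GloballyAttractive r f) (hr : 0 ≤ r)
    (hf : GoodRHS r f L)
    (hFC : ∀ x0 : ℝ → Vec n, MemC0 r x0 → ∃ x : ℝ → Vec n, IsSol r f x0 x ⊤)
    (hS : LyapunovStable r f) (hL : LagrangeStable r f) :
    UniformlyAttractive r f := by
  intro ρ ε hρ hε
  by_contra! hbad
  obtain ⟨δ, hδ, hstab⟩ := hS.exists_supN_seg_le_after hr hf hε
  obtain ⟨M, hM⟩ := hL ρ hρ
  choose X0 X hX0 hX hXρ ts hts hviol using fun k : ℕ => hbad (k + r)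
  have hXM : ∀ k u, -r ≤ u → ‖X k u‖ ≤ M := fun k _ =>
    norm_le_of_supN_seg_le hr (hX k).continuousOn (hM _ _ (hX0 k) (hX k) (hXρ k))
  have hstart : ∀ k : ℕ, r ≤ ts k - k := fun k => by linarith [hts k]
  set z : ℕ → ℝ → Vec n := fun k => seg r (X k) (ts k - k)
  have hz : ∀ k, IsSol r f (z k) (z k) ⊤ := fun k => (hX k).seg hr hf (hr.trans (hstart k))
  have hzM : ∀ k u, -r ≤ u → ‖z k u‖ ≤ M := fun k u hu => hXM k _ (by linarith [hstart k])
  obtain ⟨y, φ, hφ, hy, hzy⟩ := exists_subseq_tendstoUniformlyOn_of_lipschitzOnWith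
    isCompact_Icc z (fun k u hu => hzM k u hu.1)
    fun k => (hX k).lipschitzOnWith_seg hr hf (hXM k) (hstart k)
  obtain ⟨Z, hZ⟩ := hFC y hy
  obtain ⟨τ, hτ, η, hη, hnear⟩ := hA.exists_supN_seg_le hr hf hy hZ hδ M
  obtain ⟨j, hj, hjτ⟩ := ((Metric.tendstoUniformlyOn_iff.1 hzy η hη).and
    (eventually_ge_atTop ⌈τ⌉₊)).exists
  have hτk : τ ≤ φ j := (Nat.le_ceil τ).trans (by exact_mod_cast hjτ.trans hφ.le_apply)
  have hzτ : supN r (seg r (z (φ j)) τ) ≤ δ :=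
    hnear _ _ (hz (φ j)) (hzM (φ j)) (supN_le hr fun u hu => by
      rw [Pi.sub_apply, ← dist_eq_norm, dist_comm]; exact (hj u hu).le)
  have := hstab _ _ (hz (φ j)) τ hτ hzτ (φ j) hτk
  rw [seg_seg, sub_add_cancel] at this
  exact (hviol (φ j)).not_ge this

def trajValues (r : ℝ) (f : (ℝ → Vec n) → Vec n) (s t : ℝ) : Set ℝ :=
  {c | ∃ x0 x : ℝ → Vec n, ∃ τ, MemC0 r x0 ∧ IsSol r f x0 x ⊤ ∧ supN r x0 ≤ s ∧ max t 0 ≤ τ ∧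
    c = supN r (seg r x τ)}

def trajBound (r : ℝ) (f : (ℝ → Vec n) → Vec n) (s t : ℝ) : ℝ := sSup (trajValues r f s t)

lemma trajValues_mono {s s' t t' : ℝ} (hs : s ≤ s') (ht : t' ≤ t) :
    trajValues r f s t ⊆ trajValues r f s' t' := by
  rintro _ ⟨x0, x, τ, hx0, hx, hx0s, hτ, rfl⟩
  exact ⟨x0, x, τ, hx0, hx, hx0s.trans hs, (max_le_max_right 0 ht).trans hτ, rfl⟩

lemma trajValues_nonempty (hr : 0 ≤ r)
    (hFC : ∀ x0 : ℝ → Vec n, MemC0 r x0 → ∃ x : ℝ → Vec n, IsSol r f x0 x ⊤) {s : ℝ} (hs : 0 ≤ s)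
    (t : ℝ) : (trajValues r f s t).Nonempty := by
  obtain ⟨x, hx⟩ := hFC 0 continuousOn_const
  exact ⟨_, 0, x, max t 0, continuousOn_const, hx, (supN_zero hr).trans_le hs, le_rfl, rfl⟩

lemma bddAbove_trajValues (hL : LagrangeStable r f) (s t : ℝ) :
    BddAbove (trajValues r f s t) := by
  obtain ⟨M, hM⟩ := hL (max s 1) (by positivity)
  refine ⟨M, ?_⟩
  rintro _ ⟨x0, x, τ, hx0, hx, hx0s, hτ, rfl⟩
  exact hM x0 x hx0 hx (hx0s.trans (le_max_left s 1)) τ ((le_max_right t 0).trans hτ)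

lemma supN_seg_le_trajBound (hL : LagrangeStable r f) {x0 x : ℝ → Vec n} (hx0 : MemC0 r x0)
    (hx : IsSol r f x0 x ⊤) {t : ℝ} (ht : 0 ≤ t) :
    supN r (seg r x t) ≤ trajBound r f (supN r x0) t :=
  le_csSup (bddAbove_trajValues hL _ _) ⟨x0, x, t, hx0, hx, le_rfl, (max_eq_left ht).le, rfl⟩

lemma trajBound_le (hr : 0 ≤ r)
    (hFC : ∀ x0 : ℝ → Vec n, MemC0 r x0 → ∃ x : ℝ → Vec n, IsSol r f x0 x ⊤) {s t C : ℝ}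
    (hs : 0 ≤ s) (hC : ∀ x0 x : ℝ → Vec n, MemC0 r x0 → IsSol r f x0 x ⊤ → supN r x0 ≤ s →
      ∀ τ, max t 0 ≤ τ → supN r (seg r x τ) ≤ C) : trajBound r f s t ≤ C := by
  refine csSup_le (trajValues_nonempty hr hFC hs t) ?_
  rintro _ ⟨x0, x, τ, hx0, hx, hx0s, hτ, rfl⟩
  exact hC x0 x hx0 hx hx0s τ hτ

lemma trajBound_le_trajBound (hr : 0 ≤ r)
    (hFC : ∀ x0 : ℝ → Vec n, MemC0 r x0 → ∃ x : ℝ → Vec n, IsSol r f x0 x ⊤)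
    (hL : LagrangeStable r f) {s s' t t' : ℝ} (h0s : 0 ≤ s) (hs : s ≤ s') (ht : t' ≤ t) :
    trajBound r f s t ≤ trajBound r f s' t' :=
  csSup_le_csSup (bddAbove_trajValues hL s' t') (trajValues_nonempty hr hFC h0s t)
    (trajValues_mono hs ht)

lemma trajBound_nonneg (s t : ℝ) : 0 ≤ trajBound r f s t :=
  Real.sSup_nonneg fun _ ⟨_, _, _, _, _, _, _, hc⟩ => hc ▸ supN_nonneg _

lemma tendsto_trajBound_zero (hr : 0 ≤ r)
    (hFC : ∀ x0 : ℝ → Vec n, MemC0 r x0 → ∃ x : ℝ → Vec n, IsSol r f x0 x ⊤)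
    (hS : LyapunovStable r f) : Tendsto (trajBound r f · 0) (𝓝[≥] 0) (𝓝 0) := by
  refine tendsto_order.2 ⟨fun a ha => Eventually.of_forall fun s =>
    ha.trans_le (trajBound_nonneg s 0), fun a ha => ?_⟩
  obtain ⟨δ, hδ, hstab⟩ := hS (a / 2) (half_pos ha)
  filter_upwards [self_mem_nhdsWithin, nhdsWithin_le_nhds (eventually_lt_nhds hδ)]
    with s (hs : 0 ≤ s) hsδ
  refine (trajBound_le hr hFC hs fun x0 x hx0 hx hx0s τ hτ => ?_).trans_lt (half_lt_self ha)
  exact hstab x0 x hx0 hx (hx0s.trans hsδ.le) τ ((le_max_right 0 0).trans hτ)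

lemma tendsto_trajBound_atTop (hr : 0 ≤ r)
    (hFC : ∀ x0 : ℝ → Vec n, MemC0 r x0 → ∃ x : ℝ → Vec n, IsSol r f x0 x ⊤)
    (hU : UniformlyAttractive r f) {s : ℝ} (hs : 0 ≤ s) :
    Tendsto (trajBound r f s) atTop (𝓝 0) := by
  refine tendsto_order.2 ⟨fun a ha => Eventually.of_forall fun t =>
    ha.trans_le (trajBound_nonneg s t), fun a ha => ?_⟩
  obtain ⟨T, hT⟩ := hU (s + 1) (a / 2) (by linarith) (half_pos ha)
  filter_upwards [eventually_ge_atTop T] with t ht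
  refine (trajBound_le hr hFC hs fun x0 x hx0 hx hx0s τ hτ => ?_).trans_lt (half_lt_self ha)
  exact hT x0 x hx0 hx (by linarith) τ (ht.trans ((le_max_left t 0).trans hτ))

def UniformlyGloballyAsymptoticallyStable (r : ℝ) (f : (ℝ → Vec n) → Vec n) : Prop :=
  ∃ σ : ℝ → ℝ → ℝ, ClassKL σ ∧ ∀ x0 x : ℝ → Vec n, MemC0 r x0 → IsSol r f x0 x ⊤ →
    ∀ t : ℝ, 0 ≤ t → supN r (seg r x t) ≤ σ (supN r x0) t

theorem GloballyAttractive.uniformlyGloballyAsymptoticallyStable (hA : GloballyAttractive r f)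
    (hr : 0 ≤ r) (hf : GoodRHS r f L)
    (hFC : ∀ x0 : ℝ → Vec n, MemC0 r x0 → ∃ x : ℝ → Vec n, IsSol r f x0 x ⊤)
    (hS : LyapunovStable r f) (hL : LagrangeStable r f) :
    UniformlyGloballyAsymptoticallyStable r f := by
  have hmono : ∀ t, 0 ≤ t → MonotoneOn (trajBound r f · t) (Ici 0) := fun _ _ _ hs _ _ hss' =>
    trajBound_le_trajBound hr hFC hL hs hss' le_rfl
  have hanti : ∀ s, 0 ≤ s → AntitoneOn (trajBound r f s) (Ici 0) := fun _ hs _ _ _ _ htt' =>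
    trajBound_le_trajBound hr hFC hL hs le_rfl htt'
  have hzero := tendsto_trajBound_zero hr hFC hS
  have hU := hA.uniformlyAttractive hr hf hFC hS hL
  refine ⟨klMajorant (trajBound r f), classKL_klMajorant hmono hanti hzero
    (fun s hs => tendsto_trajBound_atTop hr hFC hU hs), fun x0 x hx0 hx t ht => ?_⟩
  exact (supN_seg_le_trajBound hL hx0 hx ht).trans
    (le_klMajorant (hmono t ht) (hanti 0 le_rfl) hzero (supN_nonneg x0) ht)

namespace UniformlyGloballyAsymptoticallyStable

lemma lyapunovStable (h : UniformlyGloballyAsymptoticallyStable r f) : LyapunovStable r f := by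
  obtain ⟨σ, ⟨-, hσs, hσt⟩, hbound⟩ := h
  intro ε hε
  obtain ⟨hcont, -, hσ0⟩ := hσs 0 le_rfl
  obtain ⟨δ, hδ, hσδ⟩ := Metric.continuousWithinAt_iff.1 (hcont 0 self_mem_Ici) ε hε
  refine ⟨δ / 2, half_pos hδ, fun x0 x hx0 hx hx0δ t ht => ?_⟩
  have hs := supN_nonneg (r := r) x0
  have hσε : σ (supN r x0) 0 < ε := by
    have := hσδ (mem_Ici.2 hs) (by rw [Real.dist_eq, sub_zero, abs_of_nonneg hs]; linarith)
    rw [hσ0, Real.dist_eq, sub_zero] at this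
    exact (le_abs_self _).trans_lt this
  exact (hbound x0 x hx0 hx t ht).trans ((hσt _ hs).1 self_mem_Ici ht ht |>.trans hσε.le)

lemma globallyAttractive (h : UniformlyGloballyAsymptoticallyStable r f) :
    GloballyAttractive r f := by
  obtain ⟨σ, ⟨-, -, hσt⟩, hbound⟩ := h
  intro x0 x hx0 hx
  refine tendsto_of_tendsto_of_tendsto_of_le_of_le' tendsto_const_nhds
    (hσt _ (supN_nonneg (r := r) x0)).2 (Eventually.of_forall fun t => supN_nonneg _) ?_
  filter_upwards [eventually_ge_atTop 0] with t ht
  exact hbound x0 x hx0 hx t ht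

lemma lagrangeStable (h : UniformlyGloballyAsymptoticallyStable r f) : LagrangeStable r f := by
  obtain ⟨σ, ⟨-, hσs, hσt⟩, hbound⟩ := h
  refine fun ρ hρ => ⟨σ ρ 0, fun x0 x hx0 hx hx0ρ t ht => ?_⟩
  have hs := supN_nonneg (r := r) x0
  calc supN r (seg r x t) ≤ σ (supN r x0) t := hbound x0 x hx0 hx t ht
    _ ≤ σ (supN r x0) 0 := (hσt _ hs).1 self_mem_Ici ht ht
    _ ≤ σ ρ 0 := (hσs 0 le_rfl).2.1.monotoneOn hs hρ.le hx0ρ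

end UniformlyGloballyAsymptoticallyStable

end DelaySystems

theorem stmt1_general (n : ℕ) (r : ℝ) (hr : 0 < r)
    (f : (ℝ → Vec n) → Vec n) (L : ℝ → ℝ) (hf : GoodRHS r f L)
    (hFC : ∀ x0 : ℝ → Vec n, MemC0 r x0 → ∃ x : ℝ → Vec n, IsSol r f x0 x ⊤) :
    ((∀ ε : ℝ, 0 < ε → ∃ δ : ℝ, 0 < δ ∧ ∀ x0 x : ℝ → Vec n, MemC0 r x0 →
        IsSol r f x0 x ⊤ → supN r x0 ≤ δ → ∀ t : ℝ, 0 ≤ t → supN r (seg r x t) ≤ ε) ∧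
     (∀ x0 x : ℝ → Vec n, MemC0 r x0 → IsSol r f x0 x ⊤ →
        Tendsto (fun t => supN r (seg r x t)) atTop (nhds 0)) ∧
     (∀ ρ : ℝ, 0 < ρ → ∃ M : ℝ, ∀ x0 x : ℝ → Vec n, MemC0 r x0 →
        IsSol r f x0 x ⊤ → supN r x0 ≤ ρ → ∀ t : ℝ, 0 ≤ t → supN r (seg r x t) ≤ M))
    ↔
    (∃ σ : ℝ → ℝ → ℝ, ClassKL σ ∧ ∀ x0 x : ℝ → Vec n, MemC0 r x0 →
        IsSol r f x0 x ⊤ → ∀ t : ℝ, 0 ≤ t → supN r (seg r x t) ≤ σ (supN r x0) t) := by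
  constructor
  · rintro ⟨hS, hA, hL⟩
    exact GloballyAttractive.uniformlyGloballyAsymptoticallyStable hA hr.le hf hFC hS hL
  · intro (h : UniformlyGloballyAsymptoticallyStable r f)
    exact ⟨h.lyapunovStable, h.globallyAttractive, h.lagrangeStable⟩

/-- For a forward-complete time-invariant delay system on `C⁰`,
(Lyapunov stability ∧ global attractivity ∧ Lagrange stability) ↔ UGAS. -/
theorem stmt1 (n : ℕ) (hn : 1 ≤ n) (r : ℝ) (hr : 0 < r)
    (f : (ℝ → Vec n) → Vec n) (L : ℝ → ℝ) (hf : GoodRHS r f L)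
    (hFC : ∀ x0 : ℝ → Vec n, MemC0 r x0 → ∃ x : ℝ → Vec n, IsSol r f x0 x ⊤) :
    ((∀ ε : ℝ, 0 < ε → ∃ δ : ℝ, 0 < δ ∧ ∀ x0 x : ℝ → Vec n, MemC0 r x0 →
        IsSol r f x0 x ⊤ → supN r x0 ≤ δ → ∀ t : ℝ, 0 ≤ t → supN r (seg r x t) ≤ ε) ∧
     (∀ x0 x : ℝ → Vec n, MemC0 r x0 → IsSol r f x0 x ⊤ →
        Tendsto (fun t => supN r (seg r x t)) atTop (nhds 0)) ∧
     (∀ ρ : ℝ, 0 < ρ → ∃ M : ℝ, ∀ x0 x : ℝ → Vec n, MemC0 r x0 →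
        IsSol r f x0 x ⊤ → supN r x0 ≤ ρ → ∀ t : ℝ, 0 ≤ t → supN r (seg r x t) ≤ M))
    ↔
    (∃ σ : ℝ → ℝ → ℝ, ClassKL σ ∧ ∀ x0 x : ℝ → Vec n, MemC0 r x0 →
        IsSol r f x0 x ⊤ → ∀ t : ℝ, 0 ≤ t → supN r (seg r x t) ≤ σ (supN r x0) t) :=
  stmt1_general n r hr f L hf hFC
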